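/- arXiv:math/0605170 — 4 statements merged into one kernel-verified Lean document; each statement's English description precedes it below -/
import Mathlib

section
/- Let X be a Segre matrix of type (k, n, A, L) and let X = u·v be a factorization with u a column vector and v a row vector with entries in the fraction field of A. Then the entries of u are k-linearly independent, and the entries of v are k-linearly independent. -/
/-- All 2×2 minors of a matrix vanish, i.e. the matrix has rank at most 1. -/
def MinorsVanish {R : Type} [CommRing R] {m n : Type} (M : Matrix m n R) : Prop :=
  ∀ i i' j j', M i j * M i' j' = M i j' * M i' j

/-- A matrix is `k`-general if some row and some column each consist of
`k`-linearly independent entries. -/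
def KGeneral (k : Type) [Field k] {V : Type} [AddCommMonoid V] [Module k V]
    {m n : Type} (M : Matrix m n V) : Prop :=
  (∃ i, LinearIndependent k fun j => M i j) ∧ ∃ j, LinearIndependent k fun i => M i j

/-- Two matrices over a `k`-algebra are `k`-equivalent if `Y = Φ X Ψ` for some
invertible square matrices `Φ`, `Ψ` with entries in `k`. -/
def KEquivalent (k : Type) [Field k] {A : Type} [CommRing A] [Algebra k A]
    {m n : Type} [Fintype m] [Fintype n] [DecidableEq m] [DecidableEq n]
    (X Y : Matrix m n A) : Prop :=
  ∃ (Φ : Matrix m m k) (Ψ : Matrix n n k), IsUnit Φ.det ∧ IsUnit Ψ.det ∧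
    Y = Φ.map (algebraMap k A) * X * Ψ.map (algebraMap k A)

/-- A Segre matrix of type `(k, n, A, L)`: an `n × n` matrix with entries in the
finite-dimensional subspace `L ⊆ A`, which is `k`-general and has rank at most one. -/
def IsSegre (k : Type) [Field k] {A : Type} [CommRing A] [Algebra k A]
    (L : Submodule k A) {n : ℕ} (X : Matrix (Fin n) (Fin n) A) : Prop :=
  (∀ i j, X i j ∈ L) ∧ MinorsVanish X ∧ KGeneral k X

/-- In any factorization `X = u · v` of a Segre matrix of type
`(k, n, A, L)` over the fraction field of `A`, the entries of `u` are `k`-linearly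
independent and the entries of `v` are `k`-linearly independent. -/
theorem segre_factorization_linearIndependent (k A : Type) [Field k] [IsAlgClosed k]
    [CommRing A] [IsDomain A] [Algebra k A] (hA : Algebra.FiniteType k A)
    (L : Submodule k A) [FiniteDimensional k L]
    (n : ℕ) (hn : 2 ≤ n) (X : Matrix (Fin n) (Fin n) A) (hX : IsSegre k L X)
    (u v : Fin n → FractionRing A)
    (huv : ∀ i j, algebraMap A (FractionRing A) (X i j) = u i * v j) :
    LinearIndependent k u ∧ LinearIndependent k v := by
  obtain ⟨-, -, ⟨i₀, hrow⟩, j₀, hcol⟩ := hX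
  have hinj : Function.Injective (algebraMap A (FractionRing A)) :=
    IsFractionRing.injective A (FractionRing A)
  constructor
  · rw [Fintype.linearIndependent_iff]
    intro c hc
    have h0 : ∑ i, c i • X i j₀ = 0 := by
      apply hinj
      rw [map_sum, map_zero]
      calc ∑ i, algebraMap A (FractionRing A) (c i • X i j₀)
          = ∑ i, c i • (u i * v j₀) := by
            refine Finset.sum_congr rfl fun i _ => ?_
            rw [Algebra.smul_def, map_mul, huv, ← IsScalarTower.algebraMap_apply,
              ← Algebra.smul_def]
        _ = (∑ i, c i • u i) * v j₀ := by rw [Finset.sum_mul]; simp [smul_mul_assoc]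
        _ = 0 := by rw [hc, zero_mul]
    exact Fintype.linearIndependent_iff.mp hcol c h0
  · rw [Fintype.linearIndependent_iff]
    intro c hc
    have h0 : ∑ j, c j • X i₀ j = 0 := by
      apply hinj
      rw [map_sum, map_zero]
      calc ∑ j, algebraMap A (FractionRing A) (c j • X i₀ j)
          = ∑ j, c j • (u i₀ * v j) := by
            refine Finset.sum_congr rfl fun j _ => ?_
            rw [Algebra.smul_def, map_mul, huv, ← IsScalarTower.algebraMap_apply,
              ← Algebra.smul_def]
        _ = u i₀ * (∑ j, c j • v j) := by rw [Finset.mul_sum]; simp [mul_smul_comm]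
        _ = 0 := by rw [hc, mul_zero]
    exact Fintype.linearIndependent_iff.mp hrow c h0
end

section
/- Let k be an algebraically closed field and A a finitely generated commutative k-algebra without zero divisors. Then for every finite index set I, the tensor product over k of copies of A indexed by I (the k-algebra A^{⊗I}) has no zero divisors. -/
/-!
Splitting off one tensor factor at a time, it suffices that `A ⊗[k] B` has no zero divisors
whenever `B` is a `k`-algebra without zero divisors. Expand elements of `A ⊗[k] B` in a `k`-basis
of `B`, with coefficients in `A`. If `x * y = 0`, then for every `k`-point `φ : A → k` the
specialisations of `x` and `y` multiply to zero in `B`, so the coefficient ideal of `x` or that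
of `y` lies in `ker φ`. By the Nullstellensatz every maximal ideal of `A` is such a kernel, so the
product of the two coefficient ideals lies in the Jacobson radical of the Jacobson domain `A`,
which is zero.
-/

open scoped TensorProduct

section Nullstellensatz
variable {k A : Type*} [Field k] [IsAlgClosed k] [CommRing A] [Algebra k A]
  [Algebra.FiniteType k A]

theorem IsAlgClosed.exists_algHom_ker_eq (m : Ideal A) [m.IsMaximal] :
    ∃ φ : A →ₐ[k] k, RingHom.ker φ = m := by
  let := Ideal.Quotient.field m
  have := finite_of_finite_type_of_isJacobsonRing k (A ⧸ m)
  let e : k ≃ₐ[k] A ⧸ m := .ofBijective (Algebra.ofId k _)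
    IsAlgClosed.algebraMap_bijective_of_isIntegral
  refine ⟨e.symm.toAlgHom.comp (Ideal.Quotient.mkₐ k m), ?_⟩
  ext a
  simp [Ideal.Quotient.eq_zero_iff_mem]

theorem IsAlgClosed.eq_bot_or_eq_bot_of_forall_algHom [IsDomain A] {I J : Ideal A}
    (h : ∀ φ : A →ₐ[k] k, I ≤ RingHom.ker φ ∨ J ≤ RingHom.ker φ) : I = ⊥ ∨ J = ⊥ := by
  have : IsJacobsonRing A := isJacobsonRing_of_finiteType (A := k)
  have hjac : (⊥ : Ideal A).jacobson = ⊥ := by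
    rw [← Ideal.radical_eq_jacobson, Ideal.radical_eq_iff.mpr Ideal.isPrime_bot.isRadical]
  rw [← Ideal.mul_eq_bot, ← le_bot_iff, ← hjac]
  refine le_sInf fun m ⟨_, (_ : m.IsMaximal)⟩ ↦ ?_
  obtain ⟨φ, rfl⟩ := IsAlgClosed.exists_algHom_ker_eq (k := k) m
  exact (h φ).elim Ideal.mul_le_left.trans Ideal.mul_le_right.trans

end Nullstellensatz

namespace Algebra.TensorProduct

variable {k A B κ : Type*} [Field k] [CommRing A] [Algebra k A] [Ring B] [Algebra k B]

noncomputable def evalLeft (φ : A →ₐ[k] k) : A ⊗[k] B →ₐ[k] B :=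
  (Algebra.TensorProduct.lid k B).toAlgHom.comp (map φ (AlgHom.id k B))

noncomputable def coeffIdeal (c : Module.Basis κ k B) (z : A ⊗[k] B) : Ideal A :=
  Ideal.span (Set.range ((c.baseChange A).repr z))

theorem repr_evalLeft (c : Module.Basis κ k B) (φ : A →ₐ[k] k) (z : A ⊗[k] B) (i : κ) :
    c.repr (evalLeft φ z) i = φ ((c.baseChange A).repr z i) := by
  induction z using TensorProduct.induction_on with
  | zero => simp
  | tmul a b => simp [evalLeft, mul_comm]
  | add z z' hz hz' => simp [hz, hz']

theorem coeffIdeal_le_ker_of_evalLeft_eq_zero (c : Module.Basis κ k B) {φ : A →ₐ[k] k}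
    {z : A ⊗[k] B} (hz : evalLeft φ z = 0) : coeffIdeal c z ≤ RingHom.ker φ := by
  refine Ideal.span_le.mpr ?_
  rintro _ ⟨i, rfl⟩
  simp [← repr_evalLeft, hz]

theorem eq_zero_of_coeffIdeal_eq_bot (c : Module.Basis κ k B) {z : A ⊗[k] B}
    (hz : coeffIdeal c z = ⊥) : z = 0 := by
  rw [coeffIdeal, Ideal.span_eq_bot, Set.forall_mem_range] at hz
  exact (c.baseChange A).repr.map_eq_zero_iff.mp (Finsupp.ext hz)

theorem noZeroDivisors_of_isAlgClosed [IsAlgClosed k] [IsDomain A] [Algebra.FiniteType k A]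
    [NoZeroDivisors B] : NoZeroDivisors (A ⊗[k] B) := by
  refine ⟨fun {x y} hxy ↦ ?_⟩
  let c := Module.Basis.ofVectorSpace k B
  have hpoint (φ : A →ₐ[k] k) : coeffIdeal c x ≤ RingHom.ker φ ∨ coeffIdeal c y ≤ RingHom.ker φ :=
    (mul_eq_zero.mp (by rw [← map_mul, hxy, map_zero] : evalLeft φ x * evalLeft φ y = 0)).imp
      (coeffIdeal_le_ker_of_evalLeft_eq_zero c) (coeffIdeal_le_ker_of_evalLeft_eq_zero c)
  exact (IsAlgClosed.eq_bot_or_eq_bot_of_forall_algHom hpoint).imp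
    (eq_zero_of_coeffIdeal_eq_bot c) (eq_zero_of_coeffIdeal_eq_bot c)

end Algebra.TensorProduct

namespace PiTensorProduct

section
variable {R ι S : Type*} [CommSemiring R] {A : ι → Type*} [∀ i, Semiring (A i)]
  [∀ i, Algebra R (A i)] [Semiring S] [Algebra R S]

theorem map_mul_of_map_tprod_mul (f : (⨂[R] i, A i) →ₗ[R] S)
    (hf : ∀ a b : Π i, A i, f (tprod R (a * b)) = f (tprod R a) * f (tprod R b))
    (x y : ⨂[R] i, A i) : f (x * y) = f x * f y := by
  induction x using PiTensorProduct.induction_on with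
  | smul_tprod r a =>
    induction y using PiTensorProduct.induction_on with
    | smul_tprod s b =>
      rw [smul_tprod_mul_smul_tprod, map_smul, map_smul, map_smul, hf, smul_mul_smul_comm]
    | add y y' hy hy' => rw [mul_add, map_add, hy, hy', map_add, mul_add]
  | add x x' hx hx' => rw [add_mul, map_add, hx, hx', map_add, add_mul]

end

variable {R A : Type*} [CommSemiring R] [Semiring A] [Algebra R A]

noncomputable def reindexAlgEquiv {ι ι₂ : Type*} (e : ι ≃ ι₂) :
    (⨂[R] _ : ι, A) ≃ₐ[R] ⨂[R] _ : ι₂, A :=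
  .ofLinearEquiv (reindex R (fun _ ↦ A) e) (reindex_tprod e 1)
    (map_mul_of_map_tprod_mul _ fun a b ↦ by simp [tprod_mul_tprod, Pi.mul_def])

noncomputable def isEmptyAlgEquiv (ι : Type*) [IsEmpty ι] : (⨂[R] _ : ι, A) ≃ₐ[R] R :=
  .ofLinearEquiv (isEmptyEquiv ι) (by simp [one_def])
    (map_mul_of_map_tprod_mul _ fun a b ↦ by simp)

noncomputable def optionAlgEquiv (ι : Type*) :
    (⨂[R] _ : Option ι, A) ≃ₐ[R] A ⊗[R] (⨂[R] _ : ι, A) :=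
  .ofLinearEquiv
    (reindex R (fun _ ↦ A) ((Equiv.optionEquivSumPUnit ι).trans (Equiv.sumComm ι Unit)) ≪≫ₗ
      (tmulEquiv R A).symm ≪≫ₗ TensorProduct.congr (subsingletonEquiv ()) (.refl R _))
    (by simp [one_def, tmulEquiv, Pi.one_def, Algebra.TensorProduct.one_def])
    (map_mul_of_map_tprod_mul _ fun a b ↦ by simp [tmulEquiv, Pi.mul_def])

end PiTensorProduct

/-- Let `k` be an algebraically closed field and `A` a finitely
generated commutative `k`-algebra without zero divisors.  Then for every finite index
set `I`, the tensor product over `k` of copies of `A` indexed by `I` has no zero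
divisors. -/
theorem piTensorProduct_noZeroDivisors (k A : Type) [Field k] [IsAlgClosed k]
    [CommRing A] [IsDomain A] [Algebra k A] (hA : Algebra.FiniteType k A)
    (I : Type) [Fintype I] :
    NoZeroDivisors (⨂[k] (_ : I), A) := by
  induction I using Finite.induction_empty_option with
  | of_equiv e _ => exact (PiTensorProduct.reindexAlgEquiv e).symm.toMulEquiv.noZeroDivisors
  | h_empty => exact (PiTensorProduct.isEmptyAlgEquiv PEmpty).toMulEquiv.noZeroDivisors
  | @h_option ι _ _ =>
    have := Algebra.TensorProduct.noZeroDivisors_of_isAlgClosed (k := k) (A := A)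
      (B := ⨂[k] _ : ι, A)
    exact (PiTensorProduct.optionAlgEquiv ι).toMulEquiv.noZeroDivisors
end

section
/- Let G be a divisor on C with deg G ≡ 0 (mod 2) and ½·deg G ≥ 2g, put n = ½·deg G − g + 1, and let X be a G-form. Choose a column u and a row v of X with k-linearly independent entries, and let f be the entry of X common to u and v. Then f does not vanish identically, and X represents the divisor D = G + min_j(div v_j), where the minimum over the divisors of the entries v_j of v is taken coefficientwise; in particular D is effective of degree ½·deg G. -/
/-- An abstraction of a nonsingular projective curve `C` of genus `g` over an
algebraically closed field `k`, packaged together with its function field `F = k(C)`,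
the divisor `div f` of a nonzero rational function (divisors are finitely supported
`ℤ`-valued functions on the points of `C`), the Riemann–Roch spaces
`L(D) = {f : f = 0 ∨ div f + D ≥ 0}`, the rings `R_E` of functions regular near the
support of a divisor and the ideals `I_E` of functions vanishing to order at least `E`,
subject to the standard facts about them (including the Riemann–Roch theorem). -/
structure AbstractCurve (k : Type) [Field k] : Type 1 where
  /-- the points of the curve -/
  Point : Type
  /-- the function field `k(C)` -/
  F : Type
  [fieldF : Field F]
  [algF : Algebra k F]
  /-- the genus of the curve -/
  genus : ℕ
  /-- `divOf f` is the divisor of zeros and poles of `f` (junk value `0` at `f = 0`);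
  its value at a point `p` is the order of vanishing of `f` at `p`. -/
  divOf : F → (Point →₀ ℤ)
  divOf_mul : ∀ f g : F, f ≠ 0 → g ≠ 0 → divOf (f * g) = divOf f + divOf g
  divOf_algebraMap : ∀ c : k, c ≠ 0 → divOf (algebraMap k F c) = 0
  divOf_eq_zero_iff : ∀ f : F, f ≠ 0 →
    (divOf f = 0 ↔ ∃ c : k, c ≠ 0 ∧ f = algebraMap k F c)
  /-- a principal divisor has degree zero -/
  deg_divOf : ∀ f : F, f ≠ 0 → (divOf f).sum (fun _ n => n) = 0
  /-- the Riemann–Roch space `L(D)` as a `k`-subspace of the function field -/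
  RR : (Point →₀ ℤ) → Submodule k F
  mem_RR : ∀ (D : Point →₀ ℤ) (f : F), f ∈ RR D ↔ f = 0 ∨ 0 ≤ divOf f + D
  finite_RR : ∀ D : Point →₀ ℤ, Module.Finite k (RR D)
  /-- the Riemann–Roch theorem: `ℓ(D) = deg D - g + 1` whenever `deg D > 2g - 2` -/
  rank_RR : ∀ D : Point →₀ ℤ, 2 * (genus : ℤ) - 2 < D.sum (fun _ n => n) →
    (Module.finrank k (RR D) : ℤ) = D.sum (fun _ n => n) - genus + 1
  /-- the `k`-space `R_E` of functions regular in a neighborhood of the support of `E` -/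
  Reg : (Point →₀ ℤ) → Submodule k F
  mem_Reg : ∀ (E : Point →₀ ℤ) (f : F),
    f ∈ Reg E ↔ f = 0 ∨ ∀ p ∈ E.support, 0 ≤ divOf f p
  /-- the `k`-space `I_E ⊆ R_E` of functions vanishing to order at least `E` -/
  VanishIdeal : (Point →₀ ℤ) → Submodule k F
  mem_VanishIdeal : ∀ (E : Point →₀ ℤ) (f : F),
    f ∈ VanishIdeal E ↔ f = 0 ∨ ∀ p ∈ E.support, E p ≤ divOf f p

namespace AbstractCurve

attribute [instance] fieldF algF

variable {k : Type} [Field k]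

/-- The degree of a divisor. -/
def deg (C : AbstractCurve k) (D : C.Point →₀ ℤ) : ℤ := D.sum fun _ n => n

/-- Linear equivalence of divisors: `D ~ D'` iff `D' = D + div f` for some `f ≠ 0`. -/
def LinEquiv (C : AbstractCurve k) (D D' : C.Point →₀ ℤ) : Prop :=
  ∃ f : C.F, f ≠ 0 ∧ D' = D + C.divOf f

/-- A `G`-form: a square matrix with entries in `L(G)`, all of whose 2×2 minors vanish,
and which is `k`-general.  (In context its size is `n = ½ deg G - g + 1`.) -/
def IsGForm (C : AbstractCurve k) (G : C.Point →₀ ℤ) {n : ℕ}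
    (X : Matrix (Fin n) (Fin n) C.F) : Prop :=
  (∀ i j, X i j ∈ C.RR G) ∧ MinorsVanish X ∧ KGeneral k X

/-- The `G`-form `X` represents the divisor `D` (of degree `½ deg G`): `X = u v` where
the entries of the column vector `u` form a `k`-basis of `L(D)` and the entries of the
row vector `v` form a `k`-basis of `L(G - D)`. -/
def Represents (C : AbstractCurve k) (G D : C.Point →₀ ℤ) {n : ℕ}
    (X : Matrix (Fin n) (Fin n) C.F) : Prop :=
  ∃ u v : Fin n → C.F,
    LinearIndependent k u ∧ Submodule.span k (Set.range u) = C.RR D ∧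
    LinearIndependent k v ∧ Submodule.span k (Set.range v) = C.RR (G - D) ∧
    ∀ i j, X i j = u i * v j

/-- An `E`-compression functional `ρ : L(G) → k` (realized as a `k`-linear functional
on the function field): `ρ` kills `L(G - E)`, and for every divisor `D` of degree
`½ deg G` the induced pairing `(a, b) ↦ ρ(ab)` on
`L(D)/L(D-E) × L(G-D)/L(G-D-E)` is a perfect pairing of `(deg E)`-dimensional
`k`-vector spaces (expressed by nondegeneracy on both sides together with both
quotients having dimension `deg E`). -/
def IsCompression (C : AbstractCurve k) (G E : C.Point →₀ ℤ) (ρ : C.F →ₗ[k] k) : Prop :=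
  (∀ f ∈ C.RR (G - E), ρ f = 0) ∧
  ∀ D : C.Point →₀ ℤ, 2 * C.deg D = C.deg G →
    (∀ a ∈ C.RR D, (∀ b ∈ C.RR (G - D), ρ (a * b) = 0) → a ∈ C.RR (D - E)) ∧
    (∀ b ∈ C.RR (G - D), (∀ a ∈ C.RR D, ρ (a * b) = 0) → b ∈ C.RR (G - D - E)) ∧
    (Module.finrank k
      (C.RR D ⧸ Submodule.comap (C.RR D).subtype (C.RR (D - E))) : ℤ) = C.deg E ∧
    (Module.finrank k
      (C.RR (G - D) ⧸
        Submodule.comap (C.RR (G - D)).subtype (C.RR (G - D - E))) : ℤ) = C.deg E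

end AbstractCurve

/-! Since the 2×2 minors of `X` vanish and `f = X i₀ j₀ ≠ 0`, `X = u v` with `u` the column
`j₀` divided by `f` and `v` the row `i₀`. For `D = G + min_j div v_j` every `v_j` lies in
`L(G - D)`, and since every `u_i v_j` lies in `L(G)`, every `u_i` lies in `L(D)`. Hence
`ℓ(D), ℓ(G - D) ≥ n = s - g + 1 > g`, which pushes both degrees above `2g - 2`; Riemann–Roch
then gives `deg D, deg (G - D) ≥ s`, so both degrees equal `s`, both spaces have dimension
`n`, and the independent families `u` and `v` are bases. -/

theorem MinorsVanish.eq_mul_inv_mul {R : Type} [Field R] {m n : Type} {M : Matrix m n R}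
    (hM : MinorsVanish M) {i₀ : m} {j₀ : n} (h₀ : M i₀ j₀ ≠ 0) (i : m) (j : n) :
    M i j = M i j₀ * (M i₀ j₀)⁻¹ * M i₀ j := by
  field_simp
  linear_combination hM i i₀ j j₀

section LinearAlgebra

variable {K V : Type*} [Field K] [AddCommGroup V] [Module K V] {ι : Type*}

theorem LinearIndependent.mul_const {A : Type*} [DivisionRing A] [Algebra K A] {w : ι → A}
    (hw : LinearIndependent K w) {c : A} (hc : c ≠ 0) :
    LinearIndependent K fun i => w i * c :=
  hw.map' (LinearMap.mulRight K c) (LinearMap.ker_eq_bot.2 (mul_left_injective₀ hc))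

variable [Fintype ι] {w : ι → V} {S : Submodule K V}

theorem LinearIndependent.card_le_finrank_of_forall_mem [FiniteDimensional K S]
    (hw : LinearIndependent K w) (hS : ∀ i, w i ∈ S) :
    Fintype.card ι ≤ Module.finrank K S := by
  rw [← finrank_span_eq_card hw]
  exact Submodule.finrank_mono (Submodule.span_le.2 (Set.range_subset_iff.2 hS))

theorem LinearIndependent.span_eq_of_finrank_le [FiniteDimensional K S]
    (hw : LinearIndependent K w) (hS : ∀ i, w i ∈ S)
    (h : Module.finrank K S ≤ Fintype.card ι) :
    Submodule.span K (Set.range w) = S :=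
  Submodule.eq_of_le_of_finrank_le (Submodule.span_le.2 (Set.range_subset_iff.2 hS))
    (by rwa [finrank_span_eq_card hw])

end LinearAlgebra

namespace AbstractCurve

variable {k : Type} [Field k] (C : AbstractCurve k)

section Degree

theorem deg_add (A B : C.Point →₀ ℤ) : C.deg (A + B) = C.deg A + C.deg B :=
  Finsupp.sum_add_index' (fun _ => rfl) (fun _ _ _ => rfl)

theorem deg_sub (A B : C.Point →₀ ℤ) : C.deg (A - B) = C.deg A - C.deg B :=
  Finsupp.sum_sub_index (fun _ _ _ => rfl)

theorem deg_single (p : C.Point) (e : ℤ) : C.deg (Finsupp.single p e) = e :=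
  Finsupp.sum_single_index rfl

theorem deg_eq_zero_of_isEmpty [IsEmpty C.Point] (A : C.Point →₀ ℤ) : C.deg A = 0 := by
  rw [Subsingleton.elim A 0]
  exact Finsupp.sum_zero_index

end Degree

section RiemannRoch

theorem mem_RR_iff_of_ne_zero {f : C.F} (hf : f ≠ 0) (A : C.Point →₀ ℤ) :
    f ∈ C.RR A ↔ ∀ p, 0 ≤ C.divOf f p + A p := by
  simp [C.mem_RR, hf, Finsupp.le_def]

instance (A : C.Point →₀ ℤ) : FiniteDimensional k (C.RR A) := C.finite_RR A

theorem RR_mono {A B : C.Point →₀ ℤ} (h : A ≤ B) : C.RR A ≤ C.RR B := by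
  intro f hf
  rw [C.mem_RR] at hf ⊢
  exact hf.imp_right fun hA => hA.trans (add_le_add_right h _)

theorem finrank_RR_eq {A : C.Point →₀ ℤ} (hA : 2 * (C.genus : ℤ) - 2 < C.deg A) :
    (Module.finrank k (C.RR A) : ℤ) = C.deg A - C.genus + 1 :=
  C.rank_RR A hA

theorem finrank_RR_le_genus [Nonempty C.Point] {A : C.Point →₀ ℤ}
    (hA : C.deg A ≤ 2 * (C.genus : ℤ) - 2) : Module.finrank k (C.RR A) ≤ C.genus := by
  obtain ⟨p⟩ := ‹Nonempty C.Point›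
  -- pad `A` at one point up to degree `2g - 1`, where Riemann–Roch applies
  set E := Finsupp.single p (2 * (C.genus : ℤ) - 1 - C.deg A)
  have hE : 0 ≤ E := Finsupp.single_nonneg.2 (by omega)
  have hdeg : C.deg (A + E) = 2 * C.genus - 1 := by rw [C.deg_add, C.deg_single]; ring
  have hle :=
    Submodule.finrank_mono (C.RR_mono (A := A) (B := A + E) (le_add_of_nonneg_right hE))
  have hRR := C.finrank_RR_eq (A := A + E) (by omega)
  omega

theorem deg_eq_of_le_finrank {G D : C.Point →₀ ℤ} {s : ℤ} {n : ℕ}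
    (hG : C.deg G = 2 * s) (hs : 2 * (C.genus : ℤ) ≤ s) (hn : (n : ℤ) = s - C.genus + 1)
    (hD : n ≤ Module.finrank k (C.RR D)) (hGD : n ≤ Module.finrank k (C.RR (G - D))) :
    C.deg D = s := by
  have hge : ∀ A, n ≤ Module.finrank k (C.RR A) → s ≤ C.deg A := by
    intro A hA
    have hlarge : 2 * (C.genus : ℤ) - 2 < C.deg A := by
      rcases isEmpty_or_nonempty C.Point with hP | hP
      · have := C.deg_eq_zero_of_isEmpty G
        have := C.deg_eq_zero_of_isEmpty A
        omega
      · by_contra h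
        have := C.finrank_RR_le_genus (not_lt.1 h)
        omega
    have := C.finrank_RR_eq hlarge
    omega
  have h₁ := hge D hD
  have h₂ := hge (G - D) hGD
  rw [C.deg_sub, hG] at h₂
  omega

theorem finrank_RR_eq_of_deg_eq {A : C.Point →₀ ℤ} {s : ℤ} {n : ℕ} (hA : C.deg A = s)
    (hs : 2 * (C.genus : ℤ) ≤ s) (hn : (n : ℤ) = s - C.genus + 1) :
    Module.finrank k (C.RR A) = n := by
  have := C.finrank_RR_eq (A := A) (by omega)
  omega

end RiemannRoch

section RowMinimum

variable {ι : Type*} [Fintype ι] (hne : (Finset.univ : Finset ι).Nonempty) {v : ι → C.F}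
  {G D : C.Point →₀ ℤ}

theorem nonneg_of_eq_add_inf'
    (hD : ∀ p, D p = G p + Finset.univ.inf' hne fun j => C.divOf (v j) p)
    (hv : ∀ j, v j ≠ 0) (hvG : ∀ j, v j ∈ C.RR G) : 0 ≤ D := by
  refine Finsupp.le_def.2 fun p => ?_
  have : -G p ≤ Finset.univ.inf' hne fun j => C.divOf (v j) p :=
    Finset.le_inf' hne _ fun j _ => by
      have := (C.mem_RR_iff_of_ne_zero (hv j) G).1 (hvG j) p
      omega
  simp only [Finsupp.coe_zero, Pi.zero_apply, hD p]
  omega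

theorem mem_RR_sub_of_eq_add_inf'
    (hD : ∀ p, D p = G p + Finset.univ.inf' hne fun j => C.divOf (v j) p)
    (j : ι) : v j ∈ C.RR (G - D) := by
  refine (C.mem_RR _ _).2 (Or.inr (Finsupp.le_def.2 fun p => ?_))
  have := Finset.inf'_le (fun j => C.divOf (v j) p) (Finset.mem_univ j)
  simp only [Finsupp.coe_zero, Pi.zero_apply, Finsupp.add_apply, Finsupp.sub_apply, hD p]
  omega

theorem mem_RR_of_forall_mul_mem
    (hD : ∀ p, D p = G p + Finset.univ.inf' hne fun j => C.divOf (v j) p)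
    (hv : ∀ j, v j ≠ 0) {u : C.F} (hu : u ≠ 0)
    (huv : ∀ j, u * v j ∈ C.RR G) : u ∈ C.RR D := by
  rw [C.mem_RR_iff_of_ne_zero hu]
  intro p
  obtain ⟨j, -, hj⟩ := Finset.exists_mem_eq_inf' hne fun j => C.divOf (v j) p
  have := (C.mem_RR_iff_of_ne_zero (mul_ne_zero hu (hv j)) G).1 (huv j) p
  rw [C.divOf_mul _ _ hu (hv j), Finsupp.add_apply] at this
  rw [hD p, hj]
  omega

end RowMinimum

end AbstractCurve

open AbstractCurve in
/-- Let `G` be a divisor with `deg G = 2s` even and `s ≥ 2g`, let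
`n = s - g + 1` and let `X` be a `G`-form.  Choose a column `j₀` and a row `i₀` of `X`
with `k`-linearly independent entries and let `f = X i₀ j₀` be their common entry.
Then `f` does not vanish identically, and `X` represents the divisor
`D = G + min_j (div v_j)` (pointwise minimum over the entries `v_j = X i₀ j` of the
chosen row); in particular `D` is effective of degree `s = ½ deg G`. -/
theorem gform_represents_row_min (k : Type) [Field k]
    (C : AbstractCurve k) (G : C.Point →₀ ℤ) (s : ℤ)
    (hG : C.deg G = 2 * s) (hs : 2 * (C.genus : ℤ) ≤ s)
    (n : ℕ) (hn : (n : ℤ) = s - C.genus + 1)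
    (X : Matrix (Fin n) (Fin n) C.F) (hX : C.IsGForm G X)
    (i₀ j₀ : Fin n)
    (hcol : LinearIndependent k fun i => X i j₀)
    (hrow : LinearIndependent k fun j => X i₀ j) :
    X i₀ j₀ ≠ 0 ∧
      ∀ D : C.Point →₀ ℤ,
        (∀ p : C.Point,
          D p = G p + Finset.univ.inf'
            ⟨⟨0, by omega⟩, Finset.mem_univ _⟩ (fun j : Fin n => C.divOf (X i₀ j) p)) →
        0 ≤ D ∧ C.deg D = s ∧ C.Represents G D X := by
  obtain ⟨hmem, hminor, -⟩ := hX
  have hf : X i₀ j₀ ≠ 0 := hrow.ne_zero j₀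
  refine ⟨hf, fun D hD => ?_⟩
  set u : Fin n → C.F := fun i => X i j₀ * (X i₀ j₀)⁻¹
  have hfac : ∀ i j, X i j = u i * X i₀ j := hminor.eq_mul_inv_mul hf
  have hu : LinearIndependent k u := hcol.mul_const (inv_ne_zero hf)
  have huD : ∀ i, u i ∈ C.RR D := fun i =>
    C.mem_RR_of_forall_mul_mem _ hD hrow.ne_zero (hu.ne_zero i) fun j => hfac i j ▸ hmem i j
  have hvGD : ∀ j, X i₀ j ∈ C.RR (G - D) := C.mem_RR_sub_of_eq_add_inf' _ hD
  have hℓD := hu.card_le_finrank_of_forall_mem huD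
  have hℓGD := hrow.card_le_finrank_of_forall_mem hvGD
  rw [Fintype.card_fin] at hℓD hℓGD
  have hdeg : C.deg D = s := C.deg_eq_of_le_finrank hG hs hn hℓD hℓGD
  have hdegGD : C.deg (G - D) = s := by rw [C.deg_sub, hG, hdeg]; ring
  refine ⟨C.nonneg_of_eq_add_inf' _ hD hrow.ne_zero fun j => hmem i₀ j, hdeg,
    u, fun j => X i₀ j, hu, ?_, hrow, ?_, hfac⟩
  · exact hu.span_eq_of_finrank_le huD (by simp [C.finrank_RR_eq_of_deg_eq hdeg hs hn])
  · exact hrow.span_eq_of_finrank_le hvGD (by simp [C.finrank_RR_eq_of_deg_eq hdegGD hs hn])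
end

section
/- Let divisors G, G', D, D' on C satisfy deg G = 2·deg D, deg G' = 2·deg D', min(½·deg G, ½·deg G') ≥ 2g and max(½·deg G, ½·deg G') ≥ 2g + 1. Put n = ½·deg G − g + 1, n' = ½·deg G' − g + 1, and n'' = n + n' + g − 1. Fix a G-form X representing D and a G'-form X' representing D'. Then for any nn' × nn' permutation matrices P and Q such that in the block decomposition P(X ∘ X')Q = [[a, b], [c, d]] with d of size n'' × n'' the block d is k-general, the block d is a (G + G')-form representing D + D'. -/
/-- The lower-right `q × q` block of an `N × N` matrix, `N = m + q`. -/
def lowerRightBlock {R : Type} {N m q : ℕ} (h : N = m + q)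
    (M : Matrix (Fin N) (Fin N) R) : Matrix (Fin q) (Fin q) R :=
  M.submatrix (fun i => (finCongr h.symm) (finSumFinEquiv (Sum.inr i)))
    (fun j => (finCongr h.symm) (finSumFinEquiv (Sum.inr j)))


/-!
The Kronecker product of the rank-one matrices `X = u v` and `X' = u' v'` is again rank one,
with column `u ⊗ u'` in `L(D + D')` and row `v ⊗ v'` in `L(G + G' - D - D')`; so is every block
of it after permuting rows and columns. Multiplying out a `k`-independent row or column of the
block shows that its column and row vectors are `k`-linearly independent, and Riemann–Roch
gives `ℓ(D + D') = ℓ(G + G' - D - D') = n''`, so they are bases.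
-/

theorem LinearIndependent.of_mul_left {K A ι : Type*} [CommSemiring K] [Semiring A]
    [Algebra K A] {c : A} {v : ι → A} (h : LinearIndependent K fun i => c * v i) :
    LinearIndependent K v :=
  h.of_comp (LinearMap.mulLeft K c)

theorem LinearIndependent.of_mul_right {K A ι : Type*} [CommSemiring K] [Semiring A]
    [Algebra K A] {c : A} {v : ι → A} (h : LinearIndependent K fun i => v i * c) :
    LinearIndependent K v :=
  h.of_comp (LinearMap.mulRight K c)

theorem Submodule.span_range_eq_of_linearIndependent {K V ι : Type*} [DivisionRing K]
    [AddCommGroup V] [Module K V] [Fintype ι] {W : Submodule K V} [FiniteDimensional K W]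
    {w : ι → V} (hw : LinearIndependent K w) (hmem : ∀ i, w i ∈ W)
    (hcard : Fintype.card ι = Module.finrank K W) :
    Submodule.span K (Set.range w) = W :=
  Submodule.eq_of_le_of_finrank_eq (Submodule.span_le.2 (Set.range_subset_iff.2 hmem))
    (by rw [finrank_span_eq_card hw, hcard])

theorem KGeneral.linearIndependent_of_eq_mul {k A m n : Type} [Field k] [CommRing A]
    [Algebra k A] {M : Matrix m n A} (hM : KGeneral k M) {u : m → A} {v : n → A}
    (huv : ∀ i j, M i j = u i * v j) : LinearIndependent k u ∧ LinearIndependent k v := by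
  obtain ⟨⟨i, hrow⟩, ⟨j, hcol⟩⟩ := hM
  simp only [huv] at hrow hcol
  exact ⟨hcol.of_mul_right, hrow.of_mul_left⟩

namespace AbstractCurve

variable {k : Type} [Field k] (C : AbstractCurve k)

theorem mul_mem_RR {A B : C.Point →₀ ℤ} {f g : C.F} (hf : f ∈ C.RR A) (hg : g ∈ C.RR B) :
    f * g ∈ C.RR (A + B) := by
  by_cases hf0 : f = 0
  · simp [hf0]
  by_cases hg0 : g = 0
  · simp [hg0]
  have hf' := ((C.mem_RR A f).1 hf).resolve_left hf0
  have hg' := ((C.mem_RR B g).1 hg).resolve_left hg0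
  refine (C.mem_RR _ _).2 (Or.inr ?_)
  rw [C.divOf_mul f g hf0 hg0, add_add_add_comm]
  exact add_nonneg hf' hg'

theorem Represents.exists_eq_mul {C : AbstractCurve k} {G D : C.Point →₀ ℤ} {n : ℕ}
    {X : Matrix (Fin n) (Fin n) C.F} (hX : C.Represents G D X) :
    ∃ u v : Fin n → C.F, (∀ i, u i ∈ C.RR D) ∧ (∀ j, v j ∈ C.RR (G - D)) ∧
      ∀ i j, X i j = u i * v j := by
  obtain ⟨u, v, -, hu, -, hv, huv⟩ := hX
  exact ⟨u, v, fun i => hu ▸ Submodule.subset_span ⟨i, rfl⟩,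
    fun j => hv ▸ Submodule.subset_span ⟨j, rfl⟩, huv⟩

theorem span_range_eq_RR {D : C.Point →₀ ℤ} (hD : 2 * (C.genus : ℤ) - 2 < C.deg D) {n : ℕ}
    (hn : (n : ℤ) = C.deg D - C.genus + 1) {u : Fin n → C.F} (hu : LinearIndependent k u)
    (hmem : ∀ i, u i ∈ C.RR D) : Submodule.span k (Set.range u) = C.RR D := by
  have := C.finite_RR D
  refine Submodule.span_range_eq_of_linearIndependent hu hmem ?_
  have hrank : (Module.finrank k (C.RR D) : ℤ) = C.deg D - C.genus + 1 := C.rank_RR D hD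
  rw [Fintype.card_fin]
  omega

theorem isGForm_and_represents_of_eq_mul {G D : C.Point →₀ ℤ} {n : ℕ}
    (hGD : C.deg G = 2 * C.deg D) (hD : 2 * (C.genus : ℤ) - 2 < C.deg D)
    (hn : (n : ℤ) = C.deg D - C.genus + 1) {M : Matrix (Fin n) (Fin n) C.F}
    (hgen : KGeneral k M) {u v : Fin n → C.F} (hu : ∀ i, u i ∈ C.RR D)
    (hv : ∀ j, v j ∈ C.RR (G - D)) (huv : ∀ i j, M i j = u i * v j) :
    C.IsGForm G M ∧ C.Represents G D M := by
  have hdeg : C.deg (G - D) = C.deg D := by rw [C.deg_sub, hGD]; ring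
  obtain ⟨hu_li, hv_li⟩ := hgen.linearIndependent_of_eq_mul huv
  refine ⟨⟨fun i j => ?_, fun i i' j j' => ?_, hgen⟩, u, v, hu_li,
    C.span_range_eq_RR hD hn hu_li hu, hv_li,
    C.span_range_eq_RR (hdeg ▸ hD) (hdeg ▸ hn) hv_li hv, huv⟩
  · simpa [huv] using C.mul_mem_RR (hu i) (hv j)
  · simp only [huv]
    ring

end AbstractCurve

open AbstractCurve in
theorem kronecker_block_gform_general (k : Type) [Field k]
    (C : AbstractCurve k) (G G' D D' : C.Point →₀ ℤ)
    (hGD : C.deg G = 2 * C.deg D) (hGD' : C.deg G' = 2 * C.deg D')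
    (hmin : 2 * (C.genus : ℤ) ≤ min (C.deg D) (C.deg D'))
    (n n' n'' : ℕ)
    (hn : (n : ℤ) = C.deg D - C.genus + 1) (hn' : (n' : ℤ) = C.deg D' - C.genus + 1)
    (hn'' : (n'' : ℤ) = (n : ℤ) + (n' : ℤ) + C.genus - 1)
    (X : Matrix (Fin n) (Fin n) C.F) (hXD : C.Represents G D X)
    (X' : Matrix (Fin n') (Fin n') C.F)
    (hXD' : C.Represents G' D' X')
    (m : ℕ) (hm : n * n' = m + n'')
    (σ τ : Equiv.Perm (Fin (n * n')))
    (hgen : KGeneral k (lowerRightBlock hm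
      ((Matrix.reindex finProdFinEquiv finProdFinEquiv
        (Matrix.kroneckerMap (· * ·) X X')).submatrix σ τ))) :
    C.IsGForm (G + G') (lowerRightBlock hm
      ((Matrix.reindex finProdFinEquiv finProdFinEquiv
        (Matrix.kroneckerMap (· * ·) X X')).submatrix σ τ)) ∧
    C.Represents (G + G') (D + D') (lowerRightBlock hm
      ((Matrix.reindex finProdFinEquiv finProdFinEquiv
        (Matrix.kroneckerMap (· * ·) X X')).submatrix σ τ)) := by
  obtain ⟨u, v, hu, hv, huv⟩ := hXD.exists_eq_mul
  obtain ⟨u', v', hu', hv', huv'⟩ := hXD'.exists_eq_mul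
  let e : Fin n'' → Fin (n * n') := fun i => finCongr hm.symm (finSumFinEquiv (Sum.inr i))
  let r : Fin n'' → Fin n × Fin n' := fun i => finProdFinEquiv.symm (σ (e i))
  let c : Fin n'' → Fin n × Fin n' := fun j => finProdFinEquiv.symm (τ (e j))
  have hdeg : C.deg (G + G') = 2 * C.deg (D + D') := by
    rw [C.deg_add, C.deg_add, hGD, hGD']; ring
  have hmin' := le_min_iff.1 hmin
  refine C.isGForm_and_represents_of_eq_mul hdeg (by rw [C.deg_add]; omega)
    (by rw [C.deg_add]; omega) hgen
    (u := fun i => u (r i).1 * u' (r i).2) (v := fun j => v (c j).1 * v' (c j).2)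
    (fun i => C.mul_mem_RR (hu _) (hu' _)) (fun j => ?_) (fun i j => ?_)
  · rw [add_sub_add_comm]
    exact C.mul_mem_RR (hv _) (hv' _)
  · change X (r i).1 (c j).1 * X' (r i).2 (c j).2 = _
    rw [huv, huv']
    ring

open AbstractCurve in
/-- In the situation of the Kronecker-product construction
(`deg G = 2 deg D`, `deg G' = 2 deg D'`, `min(½ deg G, ½ deg G') ≥ 2g`,
`max(½ deg G, ½ deg G') ≥ 2g + 1`, `n = ½ deg G - g + 1`, `n' = ½ deg G' - g + 1`,
`n'' = n + n' + g - 1`, `X` a `G`-form representing `D`, `X'` a `G'`-form representing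
`D'`), for **any** permutation matrices `P`, `Q` such that the lower-right `n'' × n''`
block `d` of `P (X ∘ X') Q` is `k`-general, the block `d` is a `(G + G')`-form
representing `D + D'`. -/
theorem kronecker_block_gform (k : Type) [Field k] [IsAlgClosed k]
    (C : AbstractCurve k) (G G' D D' : C.Point →₀ ℤ)
    (hGD : C.deg G = 2 * C.deg D) (hGD' : C.deg G' = 2 * C.deg D')
    (hmin : 2 * (C.genus : ℤ) ≤ min (C.deg D) (C.deg D'))
    (hmax : 2 * (C.genus : ℤ) + 1 ≤ max (C.deg D) (C.deg D'))
    (n n' n'' : ℕ)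
    (hn : (n : ℤ) = C.deg D - C.genus + 1) (hn' : (n' : ℤ) = C.deg D' - C.genus + 1)
    (hn'' : (n'' : ℤ) = (n : ℤ) + (n' : ℤ) + C.genus - 1)
    (X : Matrix (Fin n) (Fin n) C.F) (hX : C.IsGForm G X) (hXD : C.Represents G D X)
    (X' : Matrix (Fin n') (Fin n') C.F) (hX' : C.IsGForm G' X')
    (hXD' : C.Represents G' D' X')
    (m : ℕ) (hm : n * n' = m + n'')
    (σ τ : Equiv.Perm (Fin (n * n')))
    (hgen : KGeneral k (lowerRightBlock hm
      ((Matrix.reindex finProdFinEquiv finProdFinEquiv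
        (Matrix.kroneckerMap (· * ·) X X')).submatrix σ τ))) :
    C.IsGForm (G + G') (lowerRightBlock hm
      ((Matrix.reindex finProdFinEquiv finProdFinEquiv
        (Matrix.kroneckerMap (· * ·) X X')).submatrix σ τ)) ∧
    C.Represents (G + G') (D + D') (lowerRightBlock hm
      ((Matrix.reindex finProdFinEquiv finProdFinEquiv
        (Matrix.kroneckerMap (· * ·) X X')).submatrix σ τ)) :=
  kronecker_block_gform_general k C G G' D D' hGD hGD' hmin n n' n'' hn hn' hn'' X hXD X' hXD' m hm
    σ τ hgen
end
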